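/- Define F : ℂ × ℂ × ℂ → ℂ by F(x,y,z) = exp( y · Σ_{k=1}^{∞} f_k(z) · x^k ), where f_k(z) := (1/(2k)!)·(1 + z/(2k+1)); the series converges for all complex x, z. Then F satisfies, for all complex x, y, z, the linear partial differential equation 2x·∂F/∂x + z(z+1)·∂F/∂z − z·y·∂F/∂y = y·x·F + x·∂F/∂z, together with the boundary condition F(0,0,0) = 1. -/

import Mathlib

/-- The component functions `f_k(z) = (1/(2k)!)·(1 + z/(2k+1))`, here over ℂ. -/
noncomputable def f (k : ℕ) (z : ℂ) : ℂ :=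
  (1 / (Nat.factorial (2 * k) : ℂ)) * (1 + z / (2 * (k : ℂ) + 1))

/-- `F(x,y,z) = exp(y · ∑_{k≥1} f_k(z)·x^k)`. -/
noncomputable def F (x y z : ℂ) : ℂ :=
  Complex.exp (y * ∑' k : ℕ, f (k + 1) z * x ^ (k + 1))

/-!
Writing `f_{k+1}(z) = 1/(2k+2)! + z/(2k+3)!` splits the exponent of `F` as `y (A(x) + z B(x))`,
where `A(x) = cosh √x - 1` and `B(x) = sinh √x / √x - 1` are entire power series in `x`.
After dividing by `y F`, the equation becomes `(2x A' - x(1 + B)) + z (2x B' + B - A) = 0`,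
and both brackets vanish: they are the first-order ODEs satisfied by `cosh √x` and
`sinh √x / √x`, which are checked coefficientwise using `(n + 1) / (n + 1)! = 1 / n!`.
-/

open Nat

section FactorialDecay

variable {𝕜 : Type*} [RCLike 𝕜] {a : ℕ → 𝕜} {M : ℝ}

theorem summable_mul_pow_succ_of_norm_le (ha : ∀ k, ‖a k‖ ≤ M / (k + 1)!) (x : 𝕜) :
    Summable fun k => a k * x ^ (k + 1) := by
  have hexp : Summable fun k => M / (k + 1)! * ‖x‖ ^ (k + 1) := by
    simpa only [mul_comm_div, mul_div_assoc] using
      ((summable_nat_add_iff 1).2 (Real.summable_pow_div_factorial ‖x‖)).mul_left M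
  refine .of_norm_bounded hexp fun k => ?_
  rw [norm_mul, norm_pow]
  exact mul_le_mul_of_nonneg_right (ha k) (by positivity)

theorem norm_succ_mul_mul_pow_le (ha : ∀ k, ‖a k‖ ≤ M / (k + 1)!) {R : ℝ} {y : 𝕜}
    (hy : ‖y‖ ≤ R) (k : ℕ) : ‖((k : 𝕜) + 1) * a k * y ^ k‖ ≤ M * (R ^ k / k !) := by
  have hM : 0 ≤ M / (k + 1)! := (norm_nonneg _).trans (ha k)
  calc ‖((k : 𝕜) + 1) * a k * y ^ k‖ = (k + 1) * ‖a k‖ * ‖y‖ ^ k := by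
        rw [norm_mul, norm_mul, norm_pow, ← Nat.cast_succ, RCLike.norm_natCast, Nat.cast_succ]
    _ ≤ (k + 1) * (M / (k + 1)!) * R ^ k := by gcongr; exact ha k
    _ = M * (R ^ k / k !) := by
        rw [Nat.factorial_succ]; push_cast; field_simp

theorem summable_succ_mul_mul_pow_of_norm_le (ha : ∀ k, ‖a k‖ ≤ M / (k + 1)!) (x : 𝕜) :
    Summable fun k : ℕ => ((k : 𝕜) + 1) * a k * x ^ k :=
  .of_norm_bounded ((Real.summable_pow_div_factorial ‖x‖).mul_left M)
    (norm_succ_mul_mul_pow_le ha le_rfl)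

theorem hasDerivAt_tsum_mul_pow_succ (ha : ∀ k, ‖a k‖ ≤ M / (k + 1)!) (x : 𝕜) :
    HasDerivAt (fun w => ∑' k, a k * w ^ (k + 1)) (∑' k : ℕ, ((k : 𝕜) + 1) * a k * x ^ k) x := by
  have hx : x ∈ Metric.ball (0 : 𝕜) (‖x‖ + 1) := by simp
  refine hasDerivAt_tsum_of_isPreconnected (g' := fun (k : ℕ) y => ((k : 𝕜) + 1) * a k * y ^ k)
    ((Real.summable_pow_div_factorial (‖x‖ + 1)).mul_left M) Metric.isOpen_ball
    (convex_ball _ _).isPreconnected (fun k y _ => ?_)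
    (fun k y hy => norm_succ_mul_mul_pow_le ha (mem_ball_zero_iff.1 hy).le k) hx
    (summable_mul_pow_succ_of_norm_le ha x) hx
  refine ((hasDerivAt_pow (k + 1) y).const_mul (a k)).congr_deriv ?_
  push_cast
  ring

end FactorialDecay

theorem norm_inv_factorial_le {𝕜 : Type*} [RCLike 𝕜] {k n : ℕ} (h : k ≤ n) :
    ‖(n ! : 𝕜)⁻¹‖ ≤ 1 / k ! := by
  rw [norm_inv, RCLike.norm_natCast, one_div]
  exact inv_anti₀ (mod_cast k.factorial_pos) (mod_cast Nat.factorial_le h)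

theorem natCast_add_one_mul_inv_factorial_succ {K : Type*} [Field K] [CharZero K] (n : ℕ) :
    ((n : K) + 1) * ((n + 1)! : K)⁻¹ = (n ! : K)⁻¹ := by
  rw [Nat.factorial_succ]; push_cast; field_simp

noncomputable def coshSqrtSeries (x : ℂ) : ℂ :=
  ∑' k : ℕ, ((2 * k + 2)! : ℂ)⁻¹ * x ^ (k + 1)

noncomputable def sinhSqrtSeries (x : ℂ) : ℂ :=
  ∑' k : ℕ, ((2 * k + 3)! : ℂ)⁻¹ * x ^ (k + 1)

theorem norm_inv_factorial_two_mul_add_le {j : ℕ} (hj : 1 ≤ j) (k : ℕ) :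
    ‖((2 * k + j)! : ℂ)⁻¹‖ ≤ 1 / (k + 1)! :=
  norm_inv_factorial_le (by omega)

theorem hasDerivAt_coshSqrtSeries (x : ℂ) :
    HasDerivAt coshSqrtSeries (∑' k : ℕ, ((k : ℂ) + 1) * ((2 * k + 2)! : ℂ)⁻¹ * x ^ k) x :=
  hasDerivAt_tsum_mul_pow_succ (norm_inv_factorial_two_mul_add_le (by norm_num)) x

theorem hasDerivAt_sinhSqrtSeries (x : ℂ) :
    HasDerivAt sinhSqrtSeries (∑' k : ℕ, ((k : ℂ) + 1) * ((2 * k + 3)! : ℂ)⁻¹ * x ^ k) x :=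
  hasDerivAt_tsum_mul_pow_succ (norm_inv_factorial_two_mul_add_le (by norm_num)) x

theorem two_mul_mul_deriv_coshSqrtSeries (x : ℂ) :
    2 * x * deriv coshSqrtSeries x = x * (1 + sinhSqrtSeries x) := by
  have hsum : Summable fun k : ℕ => ((2 * k + 1)! : ℂ)⁻¹ * x ^ (k + 1) :=
    summable_mul_pow_succ_of_norm_le (norm_inv_factorial_two_mul_add_le le_rfl) x
  calc 2 * x * deriv coshSqrtSeries x
      = ∑' k : ℕ, ((2 * k + 1)! : ℂ)⁻¹ * x ^ (k + 1) := by
        rw [(hasDerivAt_coshSqrtSeries x).deriv, ← tsum_mul_left]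
        refine tsum_congr fun k => ?_
        have h := natCast_add_one_mul_inv_factorial_succ (K := ℂ) (2 * k + 1)
        push_cast at h ⊢
        linear_combination x ^ (k + 1) * h
    _ = x * (1 + sinhSqrtSeries x) := by
        rw [hsum.tsum_eq_zero_add, sinhSqrtSeries, mul_add, ← tsum_mul_left]
        congr 1
        · simp
        · exact tsum_congr fun k => by ring_nf

theorem two_mul_mul_deriv_sinhSqrtSeries_add (x : ℂ) :
    2 * x * deriv sinhSqrtSeries x + sinhSqrtSeries x = coshSqrtSeries x := by
  rw [(hasDerivAt_sinhSqrtSeries x).deriv, sinhSqrtSeries, coshSqrtSeries, ← tsum_mul_left,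
    ← Summable.tsum_add]
  · refine tsum_congr fun k => ?_
    have h := natCast_add_one_mul_inv_factorial_succ (K := ℂ) (2 * k + 2)
    push_cast at h ⊢
    linear_combination x ^ (k + 1) * h
  · exact (summable_succ_mul_mul_pow_of_norm_le
      (norm_inv_factorial_two_mul_add_le (by norm_num)) x).mul_left (2 * x)
  · exact summable_mul_pow_succ_of_norm_le (norm_inv_factorial_two_mul_add_le (by norm_num)) x

theorem f_succ_eq (k : ℕ) (z : ℂ) :
    f (k + 1) z = ((2 * k + 2)! : ℂ)⁻¹ + z * ((2 * k + 3)! : ℂ)⁻¹ := by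
  have h := natCast_add_one_mul_inv_factorial_succ (K := ℂ) (2 * k + 2)
  have h3 : (2 * ((k : ℂ) + 1) + 1) ≠ 0 := mod_cast (by omega : 2 * (k + 1) + 1 ≠ 0)
  rw [f, show 2 * (k + 1) = 2 * k + 2 by ring]
  push_cast at h ⊢
  field_simp
  linear_combination -z * h

theorem hasSum_f_succ_mul_pow (x z : ℂ) :
    HasSum (fun k : ℕ => f (k + 1) z * x ^ (k + 1)) (coshSqrtSeries x + z * sinhSqrtSeries x) := by
  have hcosh := (summable_mul_pow_succ_of_norm_le
    (norm_inv_factorial_two_mul_add_le (j := 2) (by norm_num)) x).hasSum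
  have hsinh := (summable_mul_pow_succ_of_norm_le
    (norm_inv_factorial_two_mul_add_le (j := 3) (by norm_num)) x).hasSum.mul_left z
  refine (hcosh.add hsinh).congr_fun fun k => ?_
  rw [f_succ_eq]
  ring

theorem F_eq_exp (x y z : ℂ) :
    F x y z = Complex.exp (y * (coshSqrtSeries x + z * sinhSqrtSeries x)) := by
  rw [F, (hasSum_f_succ_mul_pow x z).tsum_eq]

/-- The series `∑_{k≥1} f_k(z)·x^k` converges for all complex `x, z`, and
`F(x,y,z) = exp(y·∑_{k≥1} f_k(z)·x^k)` satisfies the linear partial differential equation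
`2x·∂F/∂x + z(z+1)·∂F/∂z − z·y·∂F/∂y = y·x·F + x·∂F/∂z` with `F(0,0,0) = 1`. -/
theorem stmt18 :
    (∀ x z : ℂ, Summable (fun k : ℕ => f (k + 1) z * x ^ (k + 1)))
      ∧ (∀ x y z : ℂ,
          2 * x * deriv (fun x' : ℂ => F x' y z) x
              + z * (z + 1) * deriv (fun z' : ℂ => F x y z') z
              - z * y * deriv (fun y' : ℂ => F x y' z) y
            = y * x * F x y z + x * deriv (fun z' : ℂ => F x y z') z)
      ∧ F 0 0 0 = 1 := by
  refine ⟨fun x z => (hasSum_f_succ_mul_pow x z).summable, fun x y z => ?_, by simp [F]⟩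
  set A := coshSqrtSeries
  set B := sinhSqrtSeries
  have hA : HasDerivAt A (deriv A x) x := (hasDerivAt_coshSqrtSeries x).differentiableAt.hasDerivAt
  have hB : HasDerivAt B (deriv B x) x := (hasDerivAt_sinhSqrtSeries x).differentiableAt.hasDerivAt
  have hFx : deriv (fun x' => F x' y z) x = F x y z * (y * (deriv A x + z * deriv B x)) := by
    simp only [F_eq_exp]
    exact ((hA.add (hB.const_mul z)).const_mul y).cexp.deriv
  have hFy : deriv (fun y' => F x y' z) y = F x y z * (A x + z * B x) := by
    simp only [F_eq_exp]
    exact ((hasDerivAt_mul_const (A x + z * B x)).cexp (x := y)).deriv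
  have hFz : deriv (fun z' => F x y z') z = F x y z * (y * B x) := by
    simp only [F_eq_exp]
    exact ((((hasDerivAt_mul_const (B x)).const_add (A x)).const_mul y).cexp (x := z)).deriv
  rw [hFx, hFy, hFz]
  linear_combination y * F x y z * two_mul_mul_deriv_coshSqrtSeries x
    + z * y * F x y z * two_mul_mul_deriv_sinhSqrtSeries_add x
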